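/- arXiv:2012.10081 — 2 statements merged into one kernel-verified Lean document; each statement's English description precedes it below -/
import Mathlib

section
/- Parity-check matrix from eigenvalues: Let C ⊆ F_q^{mℓ} be a λ-QT code with associated upper-triangular matrix G̃(x) and nonempty eigenvalue set, let β_1,…,β_t be its distinct eigenvalues, let V_i be a matrix over F whose rows form a basis of the eigenspace V_{β_i}, let H_i = (1, β_i, …, β_i^{m−1}) ⊗ V_i, and let H be the matrix stacking H_1,…,H_t. Then H is a parity-check matrix for C; that is, for c ∈ F_q^{mℓ} (read row-by-row from its m×ℓ array form, so that Hcᵀ has blocks Σ_{k=0}^{m−1} β_i^k V_i c_kᵀ where c_k is the k-th row), one has c ∈ C if and only if Hcᵀ = 0. -/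
open Polynomial

open scoped Classical in
/-- Hamming weight: the number of nonzero coordinates. -/
noncomputable def wt {ι K : Type*} [Fintype ι] [Zero K] (c : ι → K) : ℕ :=
  (Finset.univ.filter fun i => c i ≠ 0).card

/-- Minimum Hamming weight of a nonzero codeword of `S`, with `⊤` for the zero code. -/
noncomputable def minDist {ι K : Type*} [Fintype ι] [Zero K] (S : Set (ι → K)) : ℕ∞ :=
  sInf {n : ℕ∞ | ∃ c ∈ S, c ≠ 0 ∧ (wt c : ℕ∞) = n}

/-- The λ-constashift by ℓ positions on m×ℓ arrays: row 0 becomes λ times old last row. -/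
def rho {Fq : Type*} [Field Fq] (m ℓ : ℕ) [NeZero m] (lam : Fq)
    (c : ZMod m × Fin ℓ → Fq) : ZMod m × Fin ℓ → Fq :=
  fun p => (if p.1 = 0 then lam else 1) * c (p.1 - 1, p.2)

/-- Reduction of a vector of polynomials mod `X^m - λ`, written as an m×ℓ array. -/
noncomputable def arrOf {Fq : Type*} [Field Fq] (m ℓ : ℕ) [NeZero m] (lam : Fq)
    (v : Fin ℓ → Polynomial Fq) : ZMod m × Fin ℓ → Fq :=
  fun p => ((v p.2) %ₘ (Polynomial.X ^ m - Polynomial.C lam)).coeff (p.1).val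

/-! A polynomial vector lies in the `F[x]`-row space of `G̃` modulo `x^m - λ` as soon as, at every
root `b` of the separable split polynomial `x^m - λ`, its value lies in the row space of `G̃(b)`:
Lagrange interpolation of the row coefficients does the rest. This condition is empty where
`det G̃(b) ≠ 0`, and at an eigenvalue `βᵢ` the row space of `G̃(βᵢ)` is the annihilator of
`ker G̃(βᵢ)`, spanned by the rows of `Vᵢ`; so it is exactly the `i`-th block of `H cᵀ = 0`.
Finally, an `F_q`-vector in the `F`-span of `C` already lies in `C`. -/

open Matrix

namespace Matrix

variable {K ι κ : Type*} [Field K] [Fintype ι] [Fintype κ]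

theorem exists_vecMul_eq_iff_forall_mulVec_eq_zero (M : Matrix ι κ K) (w : κ → K) :
    (∃ a, a ᵥ* M = w) ↔ ∀ x, M *ᵥ x = 0 → w ⬝ᵥ x = 0 := by
  classical
  refine ⟨?_, fun hw => ?_⟩
  · rintro ⟨a, rfl⟩ x hx
    rw [← dotProduct_mulVec, hx, dotProduct_zero]
  · have hφ : dotProductEquiv K κ w ∈ (LinearMap.ker M.mulVecLin).dualAnnihilator :=
      (Submodule.mem_dualAnnihilator _).2 hw
    rw [← LinearMap.range_dualMap_eq_dualAnnihilator_ker] at hφ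
    obtain ⟨ψ, hψ⟩ := hφ
    refine ⟨(dotProductEquiv K ι).symm ψ, dotProduct_eq _ _ fun x => ?_⟩
    rw [← dotProduct_mulVec]
    have h1 := congr($((dotProductEquiv K ι).apply_symm_apply ψ) (M *ᵥ x))
    have h2 := congr($hψ x)
    simp only [dotProductEquiv_apply_apply, LinearMap.dualMap_apply, mulVecLin_apply] at h1 h2
    rw [h1, h2]

theorem mulVec_eq_zero_iff_exists_vecMul_eq {n : Type*} [Fintype n] (V : Matrix n κ K)
    (M : Matrix ι κ K) (hV : Submodule.span K (Set.range fun r => V r) = LinearMap.ker M.mulVecLin)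
    (w : κ → K) : V *ᵥ w = 0 ↔ ∃ a, a ᵥ* M = w := by
  classical
  calc V *ᵥ w = 0 ↔ ∀ r, V r ∈ LinearMap.ker (dotProductEquiv K κ w) := by
        simp [funext_iff, mulVec, dotProduct_comm]
    _ ↔ LinearMap.ker M.mulVecLin ≤ LinearMap.ker (dotProductEquiv K κ w) := by
        rw [← hV, Submodule.span_le, Set.range_subset_iff]
        rfl
    _ ↔ ∃ a, a ᵥ* M = w := by
        simp [SetLike.le_def, exists_vecMul_eq_iff_forall_mulVec_eq_zero]

end Matrix

theorem Submodule.mem_of_algebraMap_comp_mem_span {k K ι : Type*} [Field k] [Field K]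
    [Algebra k K] [Fintype ι] (S : Submodule k (ι → k)) {c : ι → k}
    (hc : algebraMap k K ∘ c ∈ span K ((algebraMap k K ∘ ·) '' S)) : c ∈ S := by
  classical
  -- a `k`-functional separating `c` from `S` still separates after extending scalars to `K`
  by_contra hcS
  obtain ⟨f, hfc, hfS⟩ := S.exists_dual_map_eq_bot_of_notMem hcS inferInstance
  set a := (dotProductEquiv k ι).symm f
  have hfa : ∀ x, f x = a ⬝ᵥ x := fun x =>
    (congr($((dotProductEquiv k ι).apply_symm_apply f) x)).symm
  have hspan : span K ((algebraMap k K ∘ ·) '' S) ≤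
      LinearMap.ker (dotProductEquiv K ι (algebraMap k K ∘ a)) := by
    rw [span_le]
    rintro _ ⟨x, hx, rfl⟩
    have hfx : f x ∈ S.map f := mem_map_of_mem hx
    rw [hfS, mem_bot] at hfx
    simp [← RingHom.map_dotProduct, ← hfa, hfx]
  apply hfc
  simpa [← RingHom.map_dotProduct, ← hfa] using hspan hc

namespace Polynomial

variable {K ι κ : Type*} [Field K] [Fintype ι]

theorem Splits.dvd_of_forall_isRoot {f g : K[X]} (hf : f.Splits) (hsep : f.Separable)
    (h : ∀ b ∈ f.roots, g.IsRoot b) : f ∣ g := by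
  rcases eq_or_ne g 0 with rfl | hg
  · exact dvd_zero f
  refine hf.dvd_of_roots_le_roots hsep.ne_zero ?_
  rw [Multiset.le_iff_subset (nodup_roots hsep)]
  exact fun b hb => (mem_roots hg).2 (h b hb)

theorem Splits.exists_vecMul_dvd_sub {R : Type*} [CommRing R] [Algebra R K] {f : K[X]}
    (hf : f.Splits) (hsep : f.Separable) (G : Matrix ι κ R[X]) (v : κ → R[X])
    (h : ∀ b ∈ f.roots, ∃ a, a ᵥ* G.map (aeval b) = fun j => aeval b (v j)) :
    ∃ u : ι → K[X], ∀ j,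
      f ∣ (v j).map (algebraMap R K) - (u ᵥ* G.map (map (algebraMap R K))) j := by
  classical
  choose a ha using h
  let s := f.roots.toFinset
  let u : ι → K[X] := fun i =>
    Lagrange.interpolate s id fun b => if hb : b ∈ f.roots then a b hb i else 0
  refine ⟨u, fun j => hf.dvd_of_forall_isRoot hsep fun b hb => ?_⟩
  have hu : (eval b ∘ u) = a b hb := by
    funext i
    simpa [u, s, hb] using
      Lagrange.eval_interpolate_at_node (s := s) (v := id) (i := b)
        (fun b => if hb : b ∈ f.roots then a b hb i else 0) (Set.injOn_id _)
        (Multiset.mem_toFinset.2 hb)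
  have hGb : (G.map (map (algebraMap R K))).map (eval b) = G.map (aeval b) := by
    ext; simp [eval_map_algebraMap]
  have := (evalRingHom b).map_vecMul (G.map (map (algebraMap R K))) u j
  rw [IsRoot, eval_sub, sub_eq_zero, eval_map_algebraMap, ← congrFun (ha b hb) j]
  simpa [hu, hGb] using this.symm

theorem exists_vecMul_aeval_eq_of_mem_span {R A : Type*} [CommRing R] [CommRing A]
    [Algebra R A] {G : Matrix ι κ R[X]} {v : κ → R[X]}
    (hv : v ∈ Submodule.span R[X] (Set.range fun i j => G i j)) (x : A) :
    ∃ a, a ᵥ* G.map (aeval x) = fun j => aeval x (v j) := by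
  obtain ⟨u, rfl⟩ := (Submodule.mem_span_range_iff_exists_fun _).1 hv
  have hu : (∑ i, u i • fun j => G i j) = u ᵥ* G := (vecMul_eq_sum u G).symm
  refine ⟨aeval x ∘ u, ?_⟩
  ext j
  rw [hu]
  exact ((aeval x).toRingHom.map_vecMul G u j).symm

theorem exists_vecMul_eq_of_aeval_det_ne_zero {R A : Type*} [CommRing R] [Field A]
    [Algebra R A] [DecidableEq ι] (G : Matrix ι ι R[X]) {x : A} (hx : aeval x G.det ≠ 0)
    (w : ι → A) : ∃ a, a ᵥ* G.map (aeval x) = w := by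
  refine vecMul_surjective_iff_isUnit.2 ((isUnit_iff_isUnit_det _).2 ?_) w
  rw [← AlgHom.mapMatrix_apply, ← AlgHom.map_det]
  exact isUnit_iff_ne_zero.2 hx

theorem separable_X_pow_sub_C_of_coprime_card [Fintype K] {m : ℕ}
    (hm : m.Coprime (Fintype.card K)) {lam : K} (hlam : lam ≠ 0) : (X ^ m - C lam).Separable := by
  have hcast := hm.cast (R := K)
  rw [FiniteField.cast_card_eq_zero, isCoprime_zero_right] at hcast
  exact separable_X_pow_sub_C lam hcast.ne_zero hlam

end Polynomial

section ArrOf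

variable {K : Type*} [Field K] {m ℓ : ℕ} [NeZero m]

noncomputable def arrPoly (c : ZMod m × Fin ℓ → K) : Fin ℓ → K[X] :=
  fun j => ∑ k : ZMod m, monomial k.val (c (k, j))

theorem arrOf_arrPoly (lam : K) (c : ZMod m × Fin ℓ → K) : arrOf m ℓ lam (arrPoly c) = c := by
  funext ⟨k, j⟩
  have hdeg : (arrPoly c j).degree < (X ^ m - C lam).degree := by
    rw [degree_X_pow_sub_C (NeZero.pos m), degree_lt_iff_coeff_zero]
    intro N hN
    simp only [arrPoly, finsetSum_coeff, coeff_monomial]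
    exact Finset.sum_eq_zero fun k' _ => if_neg (by have := ZMod.val_lt k'; omega)
  show (arrPoly c j %ₘ (X ^ m - C lam)).coeff k.val = c (k, j)
  rw [(modByMonic_eq_self_iff (monic_X_pow_sub_C lam (NeZero.ne m))).2 hdeg]
  simp [arrPoly, finsetSum_coeff, coeff_monomial, (ZMod.val_injective m).eq_iff]

variable (m ℓ) in
noncomputable def arrOfLinearMap (lam : K) : (Fin ℓ → K[X]) →ₗ[K] (ZMod m × Fin ℓ → K) where
  toFun := arrOf m ℓ lam
  map_add' v w := by funext p; simp [arrOf, add_modByMonic]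
  map_smul' a v := by funext p; simp [arrOf, smul_modByMonic]

theorem arrOfLinearMap_apply (lam : K) (v : Fin ℓ → K[X]) :
    arrOfLinearMap m ℓ lam v = arrOf m ℓ lam v :=
  rfl

theorem arrOf_eq_of_dvd_sub (lam : K) {v w : Fin ℓ → K[X]}
    (h : ∀ j, X ^ m - C lam ∣ v j - w j) : arrOf m ℓ lam v = arrOf m ℓ lam w := by
  funext p
  simp only [arrOf, modByMonic_eq_of_dvd_sub (monic_X_pow_sub_C lam (NeZero.ne m)) (h p.2)]

theorem arrOf_map {F : Type*} [Field F] (φ : K →+* F) (lam : K) (v : Fin ℓ → K[X]) :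
    arrOf m ℓ (φ lam) (fun j => (v j).map φ) = φ ∘ arrOf m ℓ lam v := by
  funext p
  have hmap : (X ^ m - C lam).map φ = X ^ m - C (φ lam) := by simp
  simp only [arrOf, Function.comp_apply, ← hmap,
    ← map_modByMonic φ (monic_X_pow_sub_C lam (NeZero.ne m)), coeff_map]

variable {F : Type*} [Field F] [Algebra K F] {lam : K} {S : Submodule K (ZMod m × Fin ℓ → K)}

theorem arrOf_smul_map_mem_span {M : Submodule K[X] (Fin ℓ → K[X])}
    (hM : ∀ v ∈ M, arrOf m ℓ lam v ∈ S) {v : Fin ℓ → K[X]} (hv : v ∈ M) (p : F[X]) :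
    arrOf m ℓ (algebraMap K F lam) (p • fun j => (v j).map (algebraMap K F)) ∈
      Submodule.span F ((algebraMap K F ∘ ·) '' S) := by
  change arrOfLinearMap m ℓ _ _ ∈ _
  induction p using Polynomial.induction_on' with
  | add p q hp hq =>
    rw [add_smul, map_add]
    exact Submodule.add_mem _ hp hq
  | monomial n a =>
    have hsmul : (monomial n a • fun j => (v j).map (algebraMap K F) : Fin ℓ → F[X]) =
        a • fun j => (((X : K[X]) ^ n • v) j).map (algebraMap K F) := by
      funext j
      simp [← C_mul_X_pow_eq_monomial, smul_eq_C_mul, mul_assoc]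
    rw [hsmul, map_smul]
    refine Submodule.smul_mem _ _ ?_
    rw [arrOfLinearMap_apply, arrOf_map]
    exact Submodule.subset_span ⟨_, hM _ (M.smul_mem _ hv), rfl⟩

theorem arrOf_vecMul_map_mem_span {ι : Type*} [Fintype ι] (G : Matrix ι (Fin ℓ) K[X])
    (hG : ∀ v ∈ Submodule.span K[X] (Set.range fun i j => G i j), arrOf m ℓ lam v ∈ S)
    (u : ι → F[X]) :
    arrOf m ℓ (algebraMap K F lam) (u ᵥ* G.map (map (algebraMap K F))) ∈
      Submodule.span F ((algebraMap K F ∘ ·) '' S) := by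
  rw [vecMul_eq_sum, ← arrOfLinearMap_apply, map_sum]
  exact Submodule.sum_mem _ fun i _ =>
    arrOf_smul_map_mem_span hG (Submodule.subset_span ⟨i, rfl⟩) (u i)

theorem mulVec_eq_zero_iff_forall_mulVec_aeval_arrPoly {ι : Type*} {n : ι → Type*} (β : ι → F)
    (V : ∀ i, Matrix (n i) (Fin ℓ) F) (H : Matrix (Σ i, n i) (ZMod m × Fin ℓ) F)
    (hH : ∀ ir p, H ir p = β ir.1 ^ p.1.val * V ir.1 ir.2 p.2) (c : ZMod m × Fin ℓ → K) :
    H *ᵥ (fun p => algebraMap K F (c p)) = 0 ↔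
      ∀ i, V i *ᵥ (fun j => aeval (β i) (arrPoly c j)) = 0 := by
  have hentry : ∀ i r, (H *ᵥ fun p => algebraMap K F (c p)) ⟨i, r⟩ =
      (V i *ᵥ fun j => aeval (β i) (arrPoly c j)) r := by
    intro i r
    simp only [mulVec, dotProduct, hH, arrPoly, map_sum, aeval_monomial, Fintype.sum_prod_type,
      Finset.mul_sum]
    rw [Finset.sum_comm]
    exact Finset.sum_congr rfl fun k _ => Finset.sum_congr rfl fun j _ => by ring
  simp only [funext_iff, Sigma.forall, Pi.zero_apply, hentry]

end ArrOf

theorem parity_check_from_eigenvalues_general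
    {Fq F : Type*} [Field Fq] [Fintype Fq] [Field F] [Algebra Fq F]
    (m ℓ : ℕ) [NeZero m] (hcop : Nat.Coprime m (Fintype.card Fq))
    (lam : Fq) (hlam : lam ≠ 0)
    (hsplit : IsSplittingField Fq F (X ^ m - C lam))
    (𝓒 : Submodule Fq (ZMod m × Fin ℓ → Fq))
    (G : Matrix (Fin ℓ) (Fin ℓ) (Polynomial Fq))
    (hGen : ∀ v : Fin ℓ → Polynomial Fq,
      arrOf m ℓ lam v ∈ 𝓒 ↔ v ∈ Submodule.span (Polynomial Fq) (Set.range fun i j => G i j))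
    (t : ℕ) (β : Fin t → F)
    (hβall : ∀ x : F, x ^ m = algebraMap Fq F lam → Polynomial.aeval x G.det = 0 → ∃ i, β i = x)
    (n : Fin t → ℕ) (V : ∀ i, Matrix (Fin (n i)) (Fin ℓ) F)
    (hVspan : ∀ i, Submodule.span F (Set.range fun r => V i r) =
      LinearMap.ker (Matrix.mulVecLin (G.map fun p => Polynomial.aeval (β i) p)))
    (H : Matrix ((i : Fin t) × Fin (n i)) (ZMod m × Fin ℓ) F)
    (hH : ∀ ir p, H ir p = β ir.1 ^ (p.1).val * V ir.1 ir.2 p.2)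
 :
    ∀ c : ZMod m × Fin ℓ → Fq,
      c ∈ 𝓒 ↔ H.mulVec (fun p => algebraMap Fq F (c p)) = 0 := by
  intro c
  have hc : c ∈ 𝓒 ↔ arrPoly c ∈ Submodule.span Fq[X] (Set.range fun i j => G i j) := by
    rw [← hGen, arrOf_arrPoly]
  rw [mulVec_eq_zero_iff_forall_mulVec_aeval_arrPoly β V H hH, hc]
  simp only [fun i => mulVec_eq_zero_iff_exists_vecMul_eq _ _ (hVspan i)]
  refine ⟨fun hvc i => exists_vecMul_aeval_eq_of_mem_span hvc (β i), fun hβc => ?_⟩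
  have hmap : (X ^ m - C lam).map (algebraMap Fq F) = X ^ m - C (algebraMap Fq F lam) := by simp
  have hsep := hmap ▸ (separable_X_pow_sub_C_of_coprime_card hcop hlam).map (f := algebraMap Fq F)
  have hspl := hmap ▸ hsplit.splits
  have hroots : ∀ b ∈ (X ^ m - C (algebraMap Fq F lam)).roots, ∃ a,
      a ᵥ* G.map (aeval b) = fun j => aeval b (arrPoly c j) := by
    intro b hb
    by_cases hdet : aeval b G.det = 0
    · have hbm : b ^ m = algebraMap Fq F lam := by
        simpa [sub_eq_zero] using (mem_roots'.1 hb).2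
      obtain ⟨i, rfl⟩ := hβall b hbm hdet
      exact hβc i
    · exact exists_vecMul_eq_of_aeval_det_ne_zero G hdet _
  obtain ⟨u, hu⟩ := hspl.exists_vecMul_dvd_sub hsep G (arrPoly c) hroots
  have hmem := arrOf_vecMul_map_mem_span G (fun v hv => (hGen v).2 hv) u (F := F)
  rw [← arrOf_eq_of_dvd_sub _ hu, arrOf_map, arrOf_arrPoly] at hmem
  exact hc.1 (Submodule.mem_of_algebraMap_comp_mem_span 𝓒 hmem)

theorem parity_check_from_eigenvalues
    {Fq F : Type*} [Field Fq] [Fintype Fq] [Field F] [Algebra Fq F]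
    (m ℓ : ℕ) [NeZero m] (hcop : Nat.Coprime m (Fintype.card Fq))
    (lam : Fq) (hlam : lam ≠ 0)
    (hsplit : IsSplittingField Fq F (X ^ m - C lam))
    (𝓒 : Submodule Fq (ZMod m × Fin ℓ → Fq))
    (hQT : ∀ c ∈ 𝓒, rho m ℓ lam c ∈ 𝓒)
    (G : Matrix (Fin ℓ) (Fin ℓ) (Polynomial Fq))
    (htri : ∀ i j, j < i → G i j = 0)
    (hdeg : ∀ i j, i < j → (G i j).degree < (G j j).degree)
    (hdiv : ∀ j, G j j ∣ X ^ m - C lam)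
    (hfull : ∀ j, G j j = X ^ m - C lam → ∀ i, i ≠ j → G i j = 0)
    (hGen : ∀ v : Fin ℓ → Polynomial Fq,
      arrOf m ℓ lam v ∈ 𝓒 ↔ v ∈ Submodule.span (Polynomial Fq) (Set.range fun i j => G i j))
    (t : ℕ) (ht : 0 < t) (β : Fin t → F) (hβinj : Function.Injective β)
    (hβΩ : ∀ i, β i ^ m = algebraMap Fq F lam)
    (hβroot : ∀ i, Polynomial.aeval (β i) G.det = 0)
    (hβall : ∀ x : F, x ^ m = algebraMap Fq F lam → Polynomial.aeval x G.det = 0 → ∃ i, β i = x)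
    (n : Fin t → ℕ) (V : ∀ i, Matrix (Fin (n i)) (Fin ℓ) F)
    (hVind : ∀ i, LinearIndependent F (fun r => V i r))
    (hVspan : ∀ i, Submodule.span F (Set.range fun r => V i r) =
      LinearMap.ker (Matrix.mulVecLin (G.map fun p => Polynomial.aeval (β i) p)))
    (H : Matrix ((i : Fin t) × Fin (n i)) (ZMod m × Fin ℓ) F)
    (hH : ∀ ir p, H ir p = β ir.1 ^ (p.1).val * V ir.1 ir.2 p.2)
 :
    ∀ c : ZMod m × Fin ℓ → Fq,
      c ∈ 𝓒 ↔ H.mulVec (fun p => algebraMap Fq F (c p)) = 0 :=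
  parity_check_from_eigenvalues_general m ℓ hcop lam hlam hsplit 𝓒 G hGen t β hβall n V hVspan H hH
end

section
/- General spectral bound for quasi-twisted codes: Let C ⊆ F_q^{mℓ} be a λ-QT code of index ℓ with nonempty eigenvalue set Ω̄ ⊆ Ω. Let P be any nonempty subset of Ω̄ and let d_P be a positive integer such that every nonzero codeword of the λ-constacyclic code D_P ⊆ F^m has Hamming weight at least d_P. Let V_P = ∩_{β∈P} V_β and let ℂ_P = ℂ(V_P) be its eigencode. Then every nonzero codeword of C has Hamming weight at least min{ d_P, d(ℂ_P) }. -/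
open Polynomial

/-- The λ-constacyclic code of length `m` over `F` with zero set `P`. -/
def Dcode {F : Type*} [Field F] (m : ℕ) (P : Set F) : Set (Fin m → F) :=
  {c | ∀ β ∈ P, ∑ k : Fin m, c k * β ^ (k : ℕ) = 0}

/-- The eigenspace of `β` for the polynomial matrix `G`: the null space of `G(β)`. -/
def Vspace {Fq F : Type*} [Field Fq] [Field F] [Algebra Fq F] (ℓ : ℕ)
    (G : Matrix (Fin ℓ) (Fin ℓ) (Polynomial Fq)) (β : F) : Set (Fin ℓ → F) :=
  {v | (G.map fun p => Polynomial.aeval β p).mulVec v = 0}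

/-- The eigencode of a set of vectors `V ⊆ F^ℓ`. -/
def eigencode {Fq F : Type*} [Field Fq] [Field F] [Algebra Fq F] (ℓ : ℕ)
    (V : Set (Fin ℓ → F)) : Set (Fin ℓ → Fq) :=
  {u | ∀ v ∈ V, ∑ j, v j * algebraMap Fq F (u j) = 0}

/-!
Write a codeword `c ∈ C` as an `m × ℓ` array with rows `c_k ∈ F_q^ℓ` and columns read as
polynomials `v_j = ∑ₖ c_{k,j} xᵏ`; then `v` lies in the `F_q[x]`-row space of `G̃`.
For `w ∈ V_P` and `β ∈ P`, the rows of `G̃(β)` annihilate `w`, hence so does `v(β)`: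
`∑ₖ (∑ⱼ w_j c_{k,j}) βᵏ = ∑ⱼ w_j v_j(β) = 0`. So `a_k = ∑ⱼ w_j c_{k,j}` is a codeword of `D_P`,
and each `a_k ≠ 0` needs a nonzero entry in row `k`: if some such `a` is nonzero,
`wt c ≥ wt a ≥ d_P`. Otherwise every row of `c` lies in the eigencode `ℂ_P`, and any nonzero row
gives `wt c ≥ d(ℂ_P)`.
-/

open Polynomial

section Weight

variable {ι κ μ K L : Type*} [Fintype ι] [Fintype κ] [Zero K] [Zero L]

theorem wt_le_wt_of_injective {f : ι → L} {g : κ → K} (t : ι → κ) (ht : Function.Injective t)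
    (h : ∀ i, f i ≠ 0 → g (t i) ≠ 0) : wt f ≤ wt g := by
  classical
  refine Finset.card_le_card_of_injOn t (fun i hi => ?_) ht.injOn
  simp only [Finset.coe_filter, Finset.mem_univ, true_and, Set.mem_ofPred_eq] at hi ⊢
  exact h i hi

theorem wt_le_wt_of_exists_ne_zero [Fintype μ] {f : ι → L} {c : κ × μ → K} (e : ι → κ)
    (he : Function.Injective e) (h : ∀ i, f i ≠ 0 → ∃ j, c (e i, j) ≠ 0) : wt f ≤ wt c := by
  classical
  refine Finset.card_le_card_of_forall_subsingleton (fun i (p : κ × μ) => e i = p.1)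
    (fun i hi => ?_) (fun p _ i₁ hi₁ i₂ hi₂ => he (hi₁.2.trans hi₂.2.symm))
  obtain ⟨j, hj⟩ := h i (Finset.mem_filter.mp hi).2
  exact ⟨(e i, j), Finset.mem_filter.mpr ⟨Finset.mem_univ _, hj⟩, rfl⟩

theorem minDist_le_wt {S : Set (ι → K)} {c : ι → K} (hc : c ∈ S) (hc0 : c ≠ 0) :
    minDist S ≤ wt c :=
  sInf_le ⟨c, hc, hc0, rfl⟩

end Weight

section Array

variable {K : Type*} {m ℓ : ℕ}

theorem ZMod.natCast_finVal_injective : Function.Injective fun k : Fin m => ((k : ℕ) : ZMod m) :=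
  fun k k' h => Fin.ext <| by
    simpa only [ZMod.val_cast_of_lt k.isLt, ZMod.val_cast_of_lt k'.isLt] using congrArg ZMod.val h

/-- Row `k` of an array, the rows being indexed by `Fin m` rather than `ZMod m`. -/
def arrayRow (c : ZMod m × Fin ℓ → K) (k : Fin m) : Fin ℓ → K :=
  fun j => c ((k : ℕ), j)

theorem exists_arrayRow_ne_zero [NeZero m] [Zero K] {c : ZMod m × Fin ℓ → K} (hc : c ≠ 0) :
    ∃ k, arrayRow c k ≠ 0 := by
  obtain ⟨⟨z, j⟩, hz⟩ := Function.ne_iff.mp hc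
  refine ⟨⟨z.val, z.val_lt⟩, Function.ne_iff.mpr ⟨j, ?_⟩⟩
  simpa only [arrayRow, ZMod.natCast_zmod_val, Pi.zero_apply] using hz

theorem wt_arrayRow_le [NeZero m] [Zero K] (c : ZMod m × Fin ℓ → K) (k : Fin m) :
    wt (arrayRow c k) ≤ wt c :=
  wt_le_wt_of_injective (fun j => (((k : ℕ) : ZMod m), j)) (fun _ _ h => (Prod.ext_iff.mp h).2)
    fun _ h => h

variable {Fq F : Type*} [Field Fq] [Field F] [Algebra Fq F]

noncomputable def columnPoly (c : ZMod m × Fin ℓ → Fq) (j : Fin ℓ) : Fq[X] :=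
  ∑ k : Fin m, C (arrayRow c k j) * X ^ (k : ℕ)

theorem arrOf_columnPoly [NeZero m] (lam : Fq) (c : ZMod m × Fin ℓ → Fq) :
    arrOf m ℓ lam (columnPoly c) = c := by
  funext ⟨z, j⟩
  have hdeg : (columnPoly c j).degree < (X ^ m - C lam).degree := by
    rw [degree_X_pow_sub_C (NeZero.pos m)]
    exact degree_sum_fin_lt _
  rw [arrOf, (modByMonic_eq_self_iff (monic_X_pow_sub_C lam (NeZero.ne m))).mpr hdeg, columnPoly,
    finsetSum_coeff, Finset.sum_eq_single ⟨z.val, z.val_lt⟩]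
  · simp [arrayRow]
  · intro k _ hk
    rw [coeff_C_mul_X_pow, if_neg fun h => hk (Fin.ext h.symm)]
  · exact fun h => absurd (Finset.mem_univ _) h

def rowPairing (w : Fin ℓ → F) (c : ZMod m × Fin ℓ → Fq) (k : Fin m) : F :=
  ∑ j, w j * algebraMap Fq F (arrayRow c k j)

theorem sum_rowPairing_mul_pow (w : Fin ℓ → F) (c : ZMod m × Fin ℓ → Fq) (β : F) :
    ∑ k, rowPairing w c k * β ^ (k : ℕ) = ∑ j, w j * aeval β (columnPoly c j) := by
  simp only [rowPairing, columnPoly, map_sum, map_mul, aeval_C, aeval_X_pow, Finset.sum_mul,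
    Finset.mul_sum]
  rw [Finset.sum_comm]
  simp only [mul_assoc]

theorem wt_rowPairing_le [NeZero m] (w : Fin ℓ → F) (c : ZMod m × Fin ℓ → Fq) :
    wt (rowPairing w c) ≤ wt c :=
  wt_le_wt_of_exists_ne_zero _ ZMod.natCast_finVal_injective fun k hk => by
    by_contra! hrow
    exact hk (Finset.sum_eq_zero fun j _ => by simp [arrayRow, hrow j])

end Array

section Eigenspace

variable {Fq F : Type*} [Field Fq] [Field F] [Algebra Fq F] {ℓ : ℕ}

theorem sum_mul_aeval_eq_zero_of_mem_span {G : Matrix (Fin ℓ) (Fin ℓ) Fq[X]} {β : F}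
    {w : Fin ℓ → F} (hw : w ∈ Vspace ℓ G β) {v : Fin ℓ → Fq[X]}
    (hv : v ∈ Submodule.span Fq[X] (Set.range fun i j => G i j)) :
    ∑ j, w j * aeval β (v j) = 0 := by
  induction hv using Submodule.span_induction with
  | mem x hx =>
    obtain ⟨i, rfl⟩ := hx
    simpa [Matrix.mulVec, dotProduct, mul_comm] using congrFun hw i
  | zero => simp
  | add x y _ _ hx hy => simp only [Pi.add_apply, map_add, mul_add, Finset.sum_add_distrib, hx, hy,
      add_zero]
  | smul p x _ hx => simp only [Pi.smul_apply, smul_eq_mul, map_mul, mul_left_comm _ (aeval β p),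
      ← Finset.mul_sum, hx, mul_zero]

theorem rowPairing_mem_Dcode {m : ℕ} [NeZero m] {G : Matrix (Fin ℓ) (Fin ℓ) Fq[X]} {P : Set F}
    {w : Fin ℓ → F} (hw : w ∈ ⋂ β ∈ P, Vspace ℓ G β) {c : ZMod m × Fin ℓ → Fq}
    (hc : columnPoly c ∈ Submodule.span Fq[X] (Set.range fun i j => G i j)) :
    rowPairing w c ∈ Dcode m P := fun β hβ => by
  rw [sum_rowPairing_mul_pow]
  exact sum_mul_aeval_eq_zero_of_mem_span (Set.mem_iInter₂.mp hw β hβ) hc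

end Eigenspace

theorem general_spectral_bound_general
    {Fq F : Type*} [Field Fq] [Field F] [Algebra Fq F]
    (m ℓ : ℕ) [NeZero m]
    (lam : Fq)
    (𝓒 : Submodule Fq (ZMod m × Fin ℓ → Fq))
    (G : Matrix (Fin ℓ) (Fin ℓ) (Polynomial Fq))
    (hGen : ∀ v : Fin ℓ → Polynomial Fq,
      arrOf m ℓ lam v ∈ 𝓒 ↔ v ∈ Submodule.span (Polynomial Fq) (Set.range fun i j => G i j))
    (P : Set F)
    (dP : ℕ)
    (hDP : ∀ c ∈ Dcode (F := F) m P, c ≠ 0 → dP ≤ wt c)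
    (VP : Set (Fin ℓ → F)) (hVP : VP = ⋂ β ∈ P, Vspace ℓ G β) :
    ∀ c ∈ 𝓒, c ≠ 0 →
      min (dP : ℕ∞) (minDist (eigencode (Fq := Fq) ℓ VP)) ≤ (wt c : ℕ∞) := by
  intro c hc hc0
  have hspan := (hGen (columnPoly c)).mp (by rwa [arrOf_columnPoly])
  by_cases hrows : ∀ k, arrayRow c k ∈ eigencode ℓ VP
  · obtain ⟨k, hk⟩ := exists_arrayRow_ne_zero hc0
    exact min_le_right _ _ |>.trans <|
      (minDist_le_wt (hrows k) hk).trans (by exact_mod_cast wt_arrayRow_le c k)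
  · obtain ⟨k, w, hw, hwk⟩ : ∃ k, ∃ w ∈ VP, rowPairing w c k ≠ 0 := by
      simpa [eigencode, rowPairing] using hrows
    have hne : rowPairing w c ≠ 0 := fun h => hwk (congrFun h k)
    have hdP := hDP _ (rowPairing_mem_Dcode (hVP ▸ hw) hspan) hne
    exact min_le_left _ _ |>.trans (by exact_mod_cast hdP.trans (wt_rowPairing_le w c))

theorem general_spectral_bound
    {Fq F : Type*} [Field Fq] [Fintype Fq] [Field F] [Algebra Fq F]
    (m ℓ : ℕ) [NeZero m] (hcop : Nat.Coprime m (Fintype.card Fq))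
    (lam : Fq) (hlam : lam ≠ 0)
    (hsplit : IsSplittingField Fq F (X ^ m - C lam))
    (𝓒 : Submodule Fq (ZMod m × Fin ℓ → Fq))
    (hQT : ∀ c ∈ 𝓒, rho m ℓ lam c ∈ 𝓒)
    (G : Matrix (Fin ℓ) (Fin ℓ) (Polynomial Fq))
    (htri : ∀ i j, j < i → G i j = 0)
    (hdiv : ∀ j, G j j ∣ X ^ m - C lam)
    (hGen : ∀ v : Fin ℓ → Polynomial Fq,
      arrOf m ℓ lam v ∈ 𝓒 ↔ v ∈ Submodule.span (Polynomial Fq) (Set.range fun i j => G i j))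
    (Ωbar : Set F)
    (hΩbar : Ωbar = {x : F | x ^ m = algebraMap Fq F lam ∧ Polynomial.aeval x G.det = 0})
    (hne : Ωbar.Nonempty)
    (P : Set F) (hP : P.Nonempty) (hPΩ : P ⊆ Ωbar)
    (dP : ℕ) (hdP : 0 < dP)
    (hDP : ∀ c ∈ Dcode (F := F) m P, c ≠ 0 → dP ≤ wt c)
    (VP : Set (Fin ℓ → F)) (hVP : VP = ⋂ β ∈ P, Vspace ℓ G β) :
    ∀ c ∈ 𝓒, c ≠ 0 →
      min (dP : ℕ∞) (minDist (eigencode (Fq := Fq) ℓ VP)) ≤ (wt c : ℕ∞) :=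
  general_spectral_bound_general m ℓ lam 𝓒 G hGen P dP hDP VP hVP
end
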